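/- Let P_1, …, P_h (h ≥ 4) be paths on the triangular grid admitting a system of non-representative edges u_1, …, u_h, and suppose three of these edges, say u_a, u_b, u_c, all lie on a common path Q on the triangular grid that has at most one bend, with u_b lying between u_a and u_c on Q. Then the path P_b (the member of the family not containing u_b) has at least two bends. -/

import Mathlib

/-- The triangular grid: the simple graph on `ℤ × ℤ` where two points are adjacent
iff their difference is `±(1,0)`, `±(0,1)` or `±(1,1)`. -/
def TGrid : SimpleGraph (ℤ × ℤ) where
  Adj u v :=
    (v.1 - u.1 = 1 ∧ v.2 - u.2 = 0) ∨ (v.1 - u.1 = -1 ∧ v.2 - u.2 = 0) ∨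
    (v.1 - u.1 = 0 ∧ v.2 - u.2 = 1) ∨ (v.1 - u.1 = 0 ∧ v.2 - u.2 = -1) ∨
    (v.1 - u.1 = 1 ∧ v.2 - u.2 = 1) ∨ (v.1 - u.1 = -1 ∧ v.2 - u.2 = -1)
  symm := ⟨by intro u v h; omega⟩
  loopless := ⟨by intro u h; omega⟩

/-- The (symmetric) direction datum of a grid edge: the pair of absolute coordinate
differences.  For grid edges this is `(1,0)` (horizontal), `(0,1)` (vertical) or
`(1,1)` (diagonal). -/
def edir (e : Sym2 (ℤ × ℤ)) : ℤ × ℤ :=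
  Sym2.lift ⟨fun u v => (|u.1 - v.1|, |u.2 - v.2|), by
    intro u v; simp [abs_sub_comm]⟩ e

/-- The `t`-th edge of a walk. -/
def wEdge {u v : ℤ × ℤ} (p : TGrid.Walk u v) (t : ℕ) : Sym2 (ℤ × ℤ) :=
  s(p.getVert t, p.getVert (t + 1))

/-- The number of bends of a walk: the number of consecutive pairs of edges with
different directions. -/
def bendCount {u v : ℤ × ℤ} (p : TGrid.Walk u v) : ℕ :=
  (List.range (p.length - 1)).countP
    (fun i => decide (edir (wEdge p i) ≠ edir (wEdge p (i + 1))))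

/-- `b` is a bend point of the walk `p`. -/
def IsBendAt {u v : ℤ × ℤ} (p : TGrid.Walk u v) (b : ℤ × ℤ) : Prop :=
  ∃ i : ℕ, i + 2 ≤ p.length ∧ p.getVert (i + 1) = b ∧
    edir (wEdge p i) ≠ edir (wEdge p (i + 1))

/-- A (nontrivial simple) path on the triangular grid. -/
structure TPath where
  src : ℤ × ℤ
  dst : ℤ × ℤ
  walk : TGrid.Walk src dst
  isPath : walk.IsPath
  nontriv : 0 < walk.length

/-- The set of grid edges of a path. -/
def pEdges (P : TPath) : Set (Sym2 (ℤ × ℤ)) := {e | e ∈ P.walk.edges}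

/-- The set of grid points of a path. -/
def pPts (P : TPath) : Set (ℤ × ℤ) := {q | q ∈ P.walk.support}

/-- A segment of a path: a maximal straight (bend-free) subpath, recorded by the
interval of edge indices `[i, j)` it occupies. -/
structure Segment (P : TPath) where
  i : ℕ
  j : ℕ
  lt : i < j
  le : j ≤ P.walk.length
  straight : ∀ t, i ≤ t → t < j → edir (wEdge P.walk t) = edir (wEdge P.walk i)
  maxLeft : i = 0 ∨ edir (wEdge P.walk (i - 1)) ≠ edir (wEdge P.walk i)
  maxRight : j = P.walk.length ∨ edir (wEdge P.walk (j - 1)) ≠ edir (wEdge P.walk j)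

/-- The set of grid edges of a segment. -/
def Segment.edges {P : TPath} (s : Segment P) : Set (Sym2 (ℤ × ℤ)) :=
  {e | ∃ t, s.i ≤ t ∧ t < s.j ∧ e = wEdge P.walk t}

/-- The set of grid points of a segment. -/
def Segment.pts {P : TPath} (s : Segment P) : Set (ℤ × ℤ) :=
  {q | ∃ t, s.i ≤ t ∧ t ≤ s.j ∧ q = P.walk.getVert t}

/-- The direction of a segment. -/
def Segment.dir {P : TPath} (s : Segment P) : ℤ × ℤ := edir (wEdge P.walk s.i)

/-- The three directions of the triangular grid. -/
inductive Dir | H | V | D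
deriving DecidableEq

/-- The direction of the (straight) line from `a` to `b`. -/
def dirOf (a b : ℤ × ℤ) : Dir :=
  if a.2 = b.2 then .H else if a.1 = b.1 then .V else .D

/-- A grid line of the triangular grid: a full horizontal, vertical or diagonal line. -/
structure GridLine where
  dir : Dir
  c : ℤ

/-- The parametrization of the points of a grid line. -/
def GridLine.pt (l : GridLine) (t : ℤ) : ℤ × ℤ :=
  match l.dir with
  | .H => (t, l.c)
  | .V => (l.c, t)
  | .D => (l.c + t, t)

/-- The `t`-th edge of a grid line. -/
def GridLine.edge (l : GridLine) (t : ℤ) : Sym2 (ℤ × ℤ) := s(l.pt t, l.pt (t + 1))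

/-- The set of grid points of a grid line. -/
def GridLine.pts (l : GridLine) : Set (ℤ × ℤ) := Set.range l.pt

/-- The set of grid edges of a grid line. -/
def GridLine.edges (l : GridLine) : Set (Sym2 (ℤ × ℤ)) := Set.range l.edge

/-- A right triangle of the triangular grid, given by a base corner `p`, a leg
length `k ≥ 1`, and one of the two possible orientations. -/
structure RightTri where
  p : ℤ × ℤ
  k : ℤ
  hk : 1 ≤ k
  orientA : Bool

/-- The set of grid edges of a right triangle. -/
def RightTri.edges (T : RightTri) : Set (Sym2 (ℤ × ℤ)) :=
  if T.orientA then
    {e | ∃ t : ℤ, 0 ≤ t ∧ t < T.k ∧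
      (e = s((T.p.1 + t, T.p.2), (T.p.1 + t + 1, T.p.2)) ∨
       e = s((T.p.1 + T.k, T.p.2 + t), (T.p.1 + T.k, T.p.2 + t + 1)) ∨
       e = s((T.p.1 + t, T.p.2 + t), (T.p.1 + t + 1, T.p.2 + t + 1)))}
  else
    {e | ∃ t : ℤ, 0 ≤ t ∧ t < T.k ∧
      (e = s((T.p.1, T.p.2 + t), (T.p.1, T.p.2 + t + 1)) ∨
       e = s((T.p.1 + t, T.p.2 + T.k), (T.p.1 + t + 1, T.p.2 + T.k)) ∨
       e = s((T.p.1 + t, T.p.2 + t), (T.p.1 + t + 1, T.p.2 + t + 1)))}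

/-- The three corners of a right triangle. -/
def RightTri.corners (T : RightTri) : Set (ℤ × ℤ) :=
  if T.orientA then {T.p, (T.p.1 + T.k, T.p.2), (T.p.1 + T.k, T.p.2 + T.k)}
  else {T.p, (T.p.1, T.p.2 + T.k), (T.p.1 + T.k, T.p.2 + T.k)}

/-- `U(𝒫)`: the subgraph of the grid formed by all segments of members of the family
that share at least one grid edge with another member, given by its set of edges. -/
def UEdges {ι : Type} (P : ι → TPath) : Set (Sym2 (ℤ × ℤ)) :=
  {e | ∃ i : ι, ∃ s : Segment (P i), e ∈ s.edges ∧
        ∃ j : ι, j ≠ i ∧ (s.edges ∩ pEdges (P j)).Nonempty}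

/-- A B₁-EPGₜ representation of a simple graph `G`: a family of at most-one-bend
paths on the triangular grid whose edge-intersection graph is `G`. -/
def IsB1EPGtRep {V : Type} (G : SimpleGraph V) (Rep : V → TPath) : Prop :=
  (∀ v, bendCount (Rep v).walk ≤ 1) ∧
  ∀ u v : V, u ≠ v → (G.Adj u v ↔ (pEdges (Rep u) ∩ pEdges (Rep v)).Nonempty)


/-!
A path with at most one bend is the union of two straight arms leaving a common corner, and
two arms with different directions never run along the same grid line.

If `u_a, u_b, u_c` lie on one arm of `Q`, they lie in this order on one grid line; `P_b`
contains `u_a` and `u_c`, so one arm of `P_b` runs along that line through both, hence through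
`u_b`. Otherwise the corner of `Q` separates `u_a` from `u_c`, which lie on two non-parallel lines
through it. Then `P_b` has one arm on each line, so its corner is the corner of `Q`, and the arm
of `P_b` through the outer edge on the line of `u_b` reaches back to the corner, through `u_b`.
Either way `u_b ∈ P_b`.
-/

def lineEdge (z v : ℤ × ℤ) (k : ℤ) : Sym2 (ℤ × ℤ) := s(z + k • v, z + (k + 1) • v)

def arm (z v : ℤ × ℤ) (n : ℕ) : Set (Sym2 (ℤ × ℤ)) := lineEdge z v '' Set.Ico 0 (n : ℤ)

lemma edir_lineEdge (z v : ℤ × ℤ) (k : ℤ) :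
    edir (lineEdge z v k) = (|v.1|, |v.2|) := by
  simp only [lineEdge, edir, Sym2.lift_mk, Prod.fst_add, Prod.snd_add, Prod.smul_fst,
    Prod.smul_snd, smul_eq_mul, Prod.mk.injEq]
  constructor <;> rw [← abs_neg] <;> ring_nf

lemma lineEdge_add_smul (y v : ℤ × ℤ) (s k : ℤ) :
    lineEdge (y + s • v) v k = lineEdge y v (s + k) := by
  simp only [lineEdge, add_smul, add_assoc]

lemma lineEdge_neg (y v : ℤ × ℤ) (k : ℤ) : lineEdge y (-v) k = lineEdge y v (-k - 1) := by
  rw [lineEdge, lineEdge, Sym2.eq_swap]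
  congr 1 <;> module

lemma lineEdge_eq_lineEdge {z a y v : ℤ × ℤ} {α τ : ℤ}
    (h : lineEdge z a α = lineEdge y v τ) :
    (a = v ∧ z = y + (τ - α) • v) ∨ (a = -v ∧ z = y + (τ + 1 + α) • v) := by
  rcases Sym2.eq_iff.mp h with ⟨h₀, h₁⟩ | ⟨h₀, h₁⟩
  · have ha : a = v := by linear_combination (norm := module) h₁ - h₀
    refine .inl ⟨ha, ?_⟩
    subst ha
    linear_combination (norm := module) h₀
  · have ha : a = -v := by linear_combination (norm := module) h₁ - h₀
    refine .inr ⟨ha, ?_⟩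
    subst ha
    linear_combination (norm := module) h₀

lemma lineEdge_mem_arm_of_le_of_le {y v z a : ℤ × ℤ} {n : ℕ} {τa τb τc : ℤ}
    (hv : v ≠ 0) (ha : lineEdge y v τa ∈ arm z a n) (hc : lineEdge y v τc ∈ arm z a n)
    (hab : τa ≤ τb) (hbc : τb ≤ τc) : lineEdge y v τb ∈ arm z a n := by
  obtain ⟨α, ⟨hα₀, hαn⟩, hα⟩ := ha
  obtain ⟨γ, ⟨hγ₀, hγn⟩, hγ⟩ := hc
  have hv' : v ≠ -v := fun h => hv (self_eq_neg.mp h)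
  rcases lineEdge_eq_lineEdge hα with ⟨hav, hz⟩ | ⟨hav, hz⟩ <;>
    rcases lineEdge_eq_lineEdge hγ with ⟨hav', hz'⟩ | ⟨hav', hz'⟩
  · have := smul_left_injective ℤ hv (add_left_cancel (hz.symm.trans hz'))
    refine ⟨α + (τb - τa), ⟨by omega, by omega⟩, ?_⟩
    rw [hav, hz, lineEdge_add_smul]
    congr 1; ring
  · exact absurd (hav.symm.trans hav') hv'
  · exact absurd (hav'.symm.trans hav) hv'
  · have := smul_left_injective ℤ hv (add_left_cancel (hz.symm.trans hz'))
    refine ⟨α - (τb - τa), ⟨by omega, by omega⟩, ?_⟩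
    rw [hav, hz, lineEdge_neg, lineEdge_add_smul]
    congr 1; ring

lemma eq_or_eq_neg_of_lineEdge_mem_arm {y v z a : ℤ × ℤ} {n : ℕ} {τ : ℤ}
    (h : lineEdge y v τ ∈ arm z a n) : a = v ∨ a = -v := by
  obtain ⟨α, -, hα⟩ := h
  exact (lineEdge_eq_lineEdge hα).imp And.left And.left

lemma lineEdge_mem_arm_of_corner {z v₁ v₂ z' a b : ℤ × ℤ} {m n : ℕ} {κa κb κc : ℤ}
    (hv : LinearIndependent ℤ ![v₁, v₂])
    (ha : lineEdge z v₁ κa ∈ arm z' a m) (hc : lineEdge z v₂ κc ∈ arm z' b n)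
    (hb₀ : 0 ≤ κb) (hba : κb ≤ κa) : lineEdge z v₁ κb ∈ arm z' a m := by
  obtain ⟨α, ⟨hα₀, hαm⟩, hα⟩ := ha
  obtain ⟨γ, -, hγ⟩ := hc
  obtain ⟨t, ht⟩ : ∃ t : ℤ, z' = z + t • v₂ := by
    rcases lineEdge_eq_lineEdge hγ with ⟨-, h⟩ | ⟨-, h⟩ <;> exact ⟨_, h⟩
  -- the corner of the arms lies on both lines through `z`, hence is `z`
  have hoffset : ∀ s : ℤ, z' = z + s • v₁ → s = 0 := fun s hs =>
    (LinearIndependent.pair_iff.mp hv s (-t) (by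
      rw [hs] at ht; linear_combination (norm := module) ht)).1
  rcases lineEdge_eq_lineEdge hα with ⟨hav, hz⟩ | ⟨hav, hz⟩
  · have := hoffset _ hz
    refine ⟨κb, ⟨hb₀, by omega⟩, ?_⟩
    rw [hav, hz, this, zero_smul, add_zero]
  · have := hoffset _ hz
    omega

lemma lineEdge_mem_arms_of_le_of_le {y v z a b : ℤ × ℤ} {m n : ℕ} {τa τb τc : ℤ}
    (hv : v ≠ 0) (hdir : ∀ e ∈ arm z a m, ∀ e' ∈ arm z b n, edir e ≠ edir e')
    (ha : lineEdge y v τa ∈ arm z a m ∪ arm z b n)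
    (hc : lineEdge y v τc ∈ arm z a m ∪ arm z b n)
    (hab : τa ≤ τb) (hbc : τb ≤ τc) : lineEdge y v τb ∈ arm z a m ∪ arm z b n := by
  have hsame := edir_lineEdge y v τa ▸ edir_lineEdge y v τc
  rcases ha with ha | ha <;> rcases hc with hc | hc
  · exact .inl (lineEdge_mem_arm_of_le_of_le hv ha hc hab hbc)
  · exact absurd hsame.symm (hdir _ ha _ hc)
  · exact absurd hsame (hdir _ hc _ ha)
  · exact .inr (lineEdge_mem_arm_of_le_of_le hv ha hc hab hbc)

lemma lineEdge_mem_arms_of_corner {z v₁ v₂ z' a b : ℤ × ℤ} {m n : ℕ} {κa κb κc : ℤ}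
    (hv : LinearIndependent ℤ ![v₁, v₂])
    (ha : lineEdge z v₁ κa ∈ arm z' a m ∪ arm z' b n)
    (hc : lineEdge z v₂ κc ∈ arm z' a m ∪ arm z' b n)
    (hb₀ : 0 ≤ κb) (hba : κb ≤ κa) : lineEdge z v₁ κb ∈ arm z' a m ∪ arm z' b n := by
  have hsame : ∀ {w : ℤ × ℤ} {k : ℕ},
      lineEdge z v₁ κa ∈ arm z' w k → lineEdge z v₂ κc ∈ arm z' w k → False := by
    intro w k h₁ h₂
    have := LinearIndependent.pair_iff.mp hv
    rcases eq_or_eq_neg_of_lineEdge_mem_arm h₁ with rfl | rfl <;>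
      rcases eq_or_eq_neg_of_lineEdge_mem_arm h₂ with h | h
    · simpa using this 1 (-1) (by rw [h]; module)
    · simpa using this 1 1 (by rw [h]; module)
    · simpa using this 1 1 (by rw [neg_eq_iff_eq_neg.mp h]; module)
    · simpa using this 1 (-1) (by rw [neg_inj.mp h]; module)
  rcases ha with ha | ha <;> rcases hc with hc | hc
  · exact (hsame ha hc).elim
  · exact .inl (lineEdge_mem_arm_of_corner hv ha hc hb₀ hba)
  · exact .inr (lineEdge_mem_arm_of_corner hv ha hc hb₀ hba)
  · exact (hsame ha hc).elim

lemma adj_zero_sub {x y : ℤ × ℤ} (h : TGrid.Adj x y) : TGrid.Adj 0 (y - x) := by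
  simp only [TGrid, Prod.fst_sub, Prod.snd_sub, Prod.fst_zero, Prod.snd_zero] at h ⊢
  omega

lemma linearIndependent_of_adj_zero {v w : ℤ × ℤ} (hv : TGrid.Adj 0 v) (hw : TGrid.Adj 0 w)
    (hvw : (|v.1|, |v.2|) ≠ (|w.1|, |w.2|)) : LinearIndependent ℤ ![v, w] := by
  obtain ⟨v₁, v₂⟩ := v
  obtain ⟨w₁, w₂⟩ := w
  rw [LinearIndependent.pair_iff]
  intro s t h
  simp only [TGrid, Prod.fst_zero, Prod.snd_zero, sub_zero] at hv hw
  simp only [Prod.ext_iff, Prod.fst_add, Prod.snd_add, Prod.smul_fst, Prod.smul_snd,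
    smul_eq_mul, Prod.fst_zero, Prod.snd_zero] at h hvw
  rcases hv with ⟨rfl, rfl⟩ | ⟨rfl, rfl⟩ | ⟨rfl, rfl⟩ | ⟨rfl, rfl⟩ | ⟨rfl, rfl⟩ | ⟨rfl, rfl⟩ <;>
    rcases hw with
      ⟨rfl, rfl⟩ | ⟨rfl, rfl⟩ | ⟨rfl, rfl⟩ | ⟨rfl, rfl⟩ | ⟨rfl, rfl⟩ | ⟨rfl, rfl⟩ <;>
    simp only [abs_one, abs_zero, abs_neg, ne_eq, Prod.mk.injEq, true_and, and_true,
      not_true_eq_false] at hvw ⊢ <;>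
    omega

section Walks

variable {x y : ℤ × ℤ}

def IsStraightOn (p : TGrid.Walk x y) (i j : ℕ) : Prop :=
  ∀ k, i ≤ k → k + 1 < j → edir (wEdge p k) = edir (wEdge p (k + 1))

lemma mem_edges_iff_exists_wEdge (p : TGrid.Walk x y) (e : Sym2 (ℤ × ℤ)) :
    e ∈ p.edges ↔ ∃ t < p.length, wEdge p t = e := by
  induction e using Sym2.ind with
  | h u v => exact p.mk_mem_edges_iff_exists

lemma step_succ_eq_of_edir_eq {p : TGrid.Walk x y} (hp : p.IsPath) {t : ℕ}
    (ht : t + 1 < p.length) (hd : edir (wEdge p t) = edir (wEdge p (t + 1))) :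
    p.getVert (t + 2) - p.getVert (t + 1) = p.getVert (t + 1) - p.getVert t := by
  have h₁ : TGrid.Adj (p.getVert t) (p.getVert (t + 1)) := p.adj_getVert_succ (by omega)
  have h₂ : TGrid.Adj (p.getVert (t + 1)) (p.getVert (t + 2)) := p.adj_getVert_succ ht
  have hne : p.getVert t ≠ p.getVert (t + 2) := fun h => by
    have := hp.getVert_injOn (show t ≤ p.length by omega) (show t + 2 ≤ p.length by omega) h
    omega
  replace hd : edir s(p.getVert t, p.getVert (t + 1)) =
      edir s(p.getVert (t + 1), p.getVert (t + 2)) := hd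
  generalize p.getVert t = A, p.getVert (t + 1) = B, p.getVert (t + 2) = C at *
  simp only [TGrid, edir, Sym2.lift_mk, abs_eq_abs, Prod.ext_iff, Prod.fst_sub, Prod.snd_sub,
    ne_eq, not_and_or] at h₁ h₂ hne hd ⊢
  omega

lemma getVert_eq_add_smul_of_straight {p : TGrid.Walk x y} (hp : p.IsPath) {i j : ℕ}
    (hj : j ≤ p.length) (hs : IsStraightOn p i j) {t : ℕ} (hit : i ≤ t) (htj : t ≤ j) :
    p.getVert t = p.getVert i + ((t : ℤ) - i) • (p.getVert (i + 1) - p.getVert i) := by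
  have hstep : ∀ k, i ≤ k → k < j →
      p.getVert (k + 1) - p.getVert k = p.getVert (i + 1) - p.getVert i := by
    intro k hk
    induction k, hk using Nat.le_induction with
    | base => exact fun _ => rfl
    | succ k hik ih =>
      intro hkj
      rw [step_succ_eq_of_edir_eq hp (by omega) (hs k hik hkj), ih (by omega)]
  induction t, hit using Nat.le_induction with
  | base => simp
  | succ k hik ih =>
    rw [← sub_add_cancel (p.getVert (k + 1)) (p.getVert k), hstep k hik (by omega),
      ih (by omega)]
    push_cast
    module

lemma two_le_bendCount {p : TGrid.Walk x y} {i j : ℕ} (hij : i < j) (hj : j + 1 < p.length)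
    (hi : edir (wEdge p i) ≠ edir (wEdge p (i + 1)))
    (hj' : edir (wEdge p j) ≠ edir (wEdge p (j + 1))) : 2 ≤ bendCount p := by
  rw [bendCount, show p.length - 1 = (i + 1) + (p.length - 1 - (i + 1)) by omega,
    List.range_add, List.countP_append]
  exact Nat.add_le_add (List.countP_pos_iff.mpr ⟨i, by simp, by simpa using hi⟩)
    (List.countP_pos_iff.mpr ⟨j, List.mem_map.mpr ⟨j - (i + 1), List.mem_range.mpr (by omega),
      by omega⟩, by simpa using hj'⟩)

lemma exists_split_of_bendCount_le_one {p : TGrid.Walk x y} (hb : bendCount p ≤ 1)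
    (hl : 0 < p.length) :
    ∃ m, 0 < m ∧ m ≤ p.length ∧ IsStraightOn p 0 m ∧ IsStraightOn p m p.length ∧
      (m < p.length → edir (wEdge p (m - 1)) ≠ edir (wEdge p m)) := by
  classical
  by_cases hex : ∃ k, k + 1 < p.length ∧ edir (wEdge p k) ≠ edir (wEdge p (k + 1))
  · obtain ⟨hlt, hbend⟩ := Nat.find_spec hex
    refine ⟨Nat.find hex + 1, by omega, by omega, fun k _ hk => ?_, fun k hk hk' => ?_,
      fun _ => by simpa using hbend⟩
    · by_contra h
      exact Nat.find_min hex (by omega) ⟨by omega, h⟩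
    · by_contra h
      have := two_le_bendCount (by omega : Nat.find hex < k) hk' hbend h
      omega
  · push Not at hex
    exact ⟨p.length, hl, le_rfl, fun k _ hk => hex k (by omega), fun k hk hk' => by omega,
      fun h => by omega⟩

lemma wEdge_eq_lineEdge_of_straight {p : TGrid.Walk x y} (hp : p.IsPath) {i j : ℕ}
    (hj : j ≤ p.length) (hs : IsStraightOn p i j) {t : ℕ} (hit : i ≤ t) (htj : t < j) :
    wEdge p t = lineEdge (p.getVert i) (p.getVert (i + 1) - p.getVert i) (t - i) := by
  rw [wEdge, lineEdge, getVert_eq_add_smul_of_straight hp hj hs hit htj.le,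
    getVert_eq_add_smul_of_straight hp hj hs (by omega) htj]
  push_cast
  ring_nf

lemma exists_corner_of_bendCount_le_one {p : TGrid.Walk x y} (hp : p.IsPath)
    (hb : bendCount p ≤ 1) (hl : 0 < p.length) :
    ∃ (z a b : ℤ × ℤ) (m : ℕ), 0 < m ∧ m ≤ p.length ∧ TGrid.Adj 0 a ∧
      (m < p.length → TGrid.Adj 0 b ∧ (|a.1|, |a.2|) ≠ (|b.1|, |b.2|)) ∧
      (∀ t < m, wEdge p t = lineEdge z a (m - 1 - t)) ∧
      (∀ t, m ≤ t → t < p.length → wEdge p t = lineEdge z b (t - m)) := by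
  obtain ⟨m, hm₀, hm, hs₁, hs₂, hbend⟩ := exists_split_of_bendCount_le_one hb hl
  have hz : p.getVert m = p.getVert 0 + (m : ℤ) • (p.getVert 1 - p.getVert 0) := by
    simpa using getVert_eq_add_smul_of_straight hp hm hs₁ (Nat.zero_le m) le_rfl
  have hA : ∀ t < m,
      wEdge p t = lineEdge (p.getVert m) (p.getVert 0 - p.getVert 1) (m - 1 - t) := by
    intro t ht
    rw [wEdge_eq_lineEdge_of_straight hp hm hs₁ (Nat.zero_le t) ht, hz,
      ← neg_sub (p.getVert 1), lineEdge_neg, lineEdge_add_smul]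
    congr 1
    push_cast
    ring
  have hB : ∀ t, m ≤ t → t < p.length →
      wEdge p t = lineEdge (p.getVert m) (p.getVert (m + 1) - p.getVert m) (t - m) :=
    fun t hmt ht => wEdge_eq_lineEdge_of_straight hp le_rfl hs₂ hmt ht
  refine ⟨_, _, _, m, hm₀, hm, adj_zero_sub (p.adj_getVert_succ hl).symm, fun hml => ⟨
    adj_zero_sub (p.adj_getVert_succ hml), ?_⟩, hA, hB⟩
  have := hbend hml
  rwa [hA (m - 1) (by omega), hB m le_rfl hml, edir_lineEdge, edir_lineEdge] at this

lemma exists_arms_of_bendCount_le_one {p : TGrid.Walk x y} (hp : p.IsPath)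
    (hb : bendCount p ≤ 1) (hl : 0 < p.length) :
    ∃ (z a b : ℤ × ℤ) (m n : ℕ), (∀ e ∈ arm z a m, ∀ e' ∈ arm z b n, edir e ≠ edir e') ∧
      ∀ e, e ∈ p.edges ↔ e ∈ arm z a m ∪ arm z b n := by
  obtain ⟨z, a, b, m, hm₀, hm, -, hab, hA, hB⟩ := exists_corner_of_bendCount_le_one hp hb hl
  refine ⟨z, a, b, m, p.length - m, ?_, fun e => ?_⟩
  · rintro _ ⟨α, -, rfl⟩ _ ⟨β, ⟨hβ₀, hβ⟩, rfl⟩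
    rw [edir_lineEdge, edir_lineEdge]
    exact (hab (by omega)).2
  rw [mem_edges_iff_exists_wEdge]
  constructor
  · rintro ⟨t, ht, rfl⟩
    rcases lt_or_ge t m with htm | htm
    · exact .inl ⟨_, ⟨by omega, by omega⟩, (hA t htm).symm⟩
    · exact .inr ⟨_, ⟨by omega, by omega⟩, (hB t htm ht).symm⟩
  · rintro (⟨α, ⟨hα₀, hα⟩, rfl⟩ | ⟨β, ⟨hβ₀, hβ⟩, rfl⟩)
    · lift α to ℕ using hα₀
      refine ⟨m - 1 - α, by omega, ?_⟩
      rw [hA _ (by omega)]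
      congr 1
      omega
    · lift β to ℕ using hβ₀
      refine ⟨m + β, by omega, ?_⟩
      rw [hB _ (by omega) (by omega)]
      congr 1
      omega

end Walks

lemma wEdge_mem_edges_of_lt_of_lt {q₁ q₂ w₁ w₂ : ℤ × ℤ} {Q : TGrid.Walk q₁ q₂}
    {W : TGrid.Walk w₁ w₂} (hQ : Q.IsPath) (hW : W.IsPath) (hQb : bendCount Q ≤ 1)
    (hWb : bendCount W ≤ 1) {ta tb tc : ℕ} (hab : ta < tb) (hbc : tb < tc)
    (htc : tc < Q.length) (ha : wEdge Q ta ∈ W.edges) (hc : wEdge Q tc ∈ W.edges) :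
    wEdge Q tb ∈ W.edges := by
  have hWl : 0 < W.length := by
    obtain ⟨t, ht, -⟩ := (mem_edges_iff_exists_wEdge W _).mp ha
    omega
  obtain ⟨z', a', b', m', n', hdir, hWedges⟩ := exists_arms_of_bendCount_le_one hW hWb hWl
  rw [hWedges] at ha hc ⊢
  obtain ⟨z, a, b, m, -, -, ha₀, hbend, hA, hB⟩ :=
    exists_corner_of_bendCount_le_one hQ hQb (by omega)
  rcases lt_or_ge tc m with hcm | hcm
  · rw [hA ta (by omega)] at ha
    rw [hA tc hcm] at hc
    rw [hA tb (by omega)]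
    exact lineEdge_mem_arms_of_le_of_le (ha₀.ne' : a ≠ 0) hdir hc ha (by omega) (by omega)
  rcases lt_or_ge ta m with ham | ham
  · obtain ⟨hb₀, hab⟩ := hbend (by omega)
    have hind := linearIndependent_of_adj_zero ha₀ hb₀ hab
    rw [hA ta ham] at ha
    rw [hB tc hcm htc] at hc
    rcases lt_or_ge tb m with hbm | hbm
    · rw [hA tb hbm]
      exact lineEdge_mem_arms_of_corner hind ha hc (by omega) (by omega)
    · rw [hB tb hbm (by omega)]
      exact lineEdge_mem_arms_of_corner (LinearIndependent.pair_symm_iff.mp hind) hc ha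
        (by omega) (by omega)
  · obtain ⟨hb₀, -⟩ := hbend (by omega)
    rw [hB ta ham (by omega)] at ha
    rw [hB tc hcm htc] at hc
    rw [hB tb (by omega) (by omega)]
    exact lineEdge_mem_arms_of_le_of_le (hb₀.ne' : b ≠ 0) hdir ha hc (by omega) (by omega)

theorem stmt6_general (h : ℕ)
    (P : Fin h → TPath) (u : Fin h → Sym2 (ℤ × ℤ))
    (hmiss : ∀ i, u i ∉ pEdges (P i))
    (hhit : ∀ i j, i ≠ j → u i ∈ pEdges (P j))
    (a b c : Fin h) (hab : a ≠ b) (hbc : b ≠ c)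
    (Q : TPath) (hQ : bendCount Q.walk ≤ 1)
    (ta tb tc : ℕ)
    (hta : ta < Q.walk.length) (htc : tc < Q.walk.length)
    (hea : u a = wEdge Q.walk ta) (heb : u b = wEdge Q.walk tb) (hec : u c = wEdge Q.walk tc)
    (hbetween : (ta < tb ∧ tb < tc) ∨ (tc < tb ∧ tb < ta)) :
    2 ≤ bendCount (P b).walk := by
  by_contra! hlt
  have hPb : bendCount (P b).walk ≤ 1 := by omega
  have ha : wEdge Q.walk ta ∈ (P b).walk.edges := hea ▸ hhit a b hab
  have hc : wEdge Q.walk tc ∈ (P b).walk.edges := hec ▸ hhit c b hbc.symm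
  apply hmiss b
  rw [heb]
  rcases hbetween with ⟨h₁, h₂⟩ | ⟨h₁, h₂⟩
  · exact wEdge_mem_edges_of_lt_of_lt Q.isPath (P b).isPath hQ hPb h₁ h₂ htc ha hc
  · exact wEdge_mem_edges_of_lt_of_lt Q.isPath (P b).isPath hQ hPb h₁ h₂ hta hc ha

/-- If a family of at least four paths on the triangular grid
admits a system of non-representative edges, three of which lie on a common path `Q`
with at most one bend, with one lying between the other two on `Q`, then the path
missing the middle edge has at least two bends. -/
theorem stmt6 (h : ℕ) (hh : 4 ≤ h)
    (P : Fin h → TPath) (u : Fin h → Sym2 (ℤ × ℤ))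
    (hinj : Function.Injective u)
    (hmiss : ∀ i, u i ∉ pEdges (P i))
    (hhit : ∀ i j, i ≠ j → u i ∈ pEdges (P j))
    (a b c : Fin h) (hab : a ≠ b) (hbc : b ≠ c) (hac : a ≠ c)
    (Q : TPath) (hQ : bendCount Q.walk ≤ 1)
    (ta tb tc : ℕ)
    (hta : ta < Q.walk.length) (htb : tb < Q.walk.length) (htc : tc < Q.walk.length)
    (hea : u a = wEdge Q.walk ta) (heb : u b = wEdge Q.walk tb) (hec : u c = wEdge Q.walk tc)
    (hbetween : (ta < tb ∧ tb < tc) ∨ (tc < tb ∧ tb < ta)) :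
    2 ≤ bendCount (P b).walk :=
  stmt6_general h P u hmiss hhit a b c hab hbc Q hQ ta tb tc hta htc hea heb hec hbetween
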